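/- arXiv:1609.09588 — 2 statements merged into one kernel-verified Lean document; each statement's English description precedes it below -/
import Mathlib

section
/- Let C be a one-Lee-weight additive code in Z₂^α × R^β with nonzero Lee weight m, where every coordinate position is nonzero on C. Then there exists a unique positive integer λ such that m = λ|C|/2 and α + 2β = λ(|C| − 1). -/
open DualNumber

/-- The binary field `ℤ₂`. -/
abbrev R2 : Type := ZMod 2

/-- The ring `R = ℤ₂[u]/(u²) = ℤ₂ + u ℤ₂`, realized as dual numbers over `ℤ₂`;
`u` is `eps`. -/
abbrev Ru : Type := DualNumber (ZMod 2)

instance : Fintype Ru := inferInstanceAs (Fintype (ZMod 2 × ZMod 2))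
instance : DecidableEq Ru := inferInstanceAs (DecidableEq (ZMod 2 × ZMod 2))

/-- The Gray map `ψ : R → ℤ₂²`, `ψ(a + u b) = (b, a + b)`. -/
def psi (x : Ru) : R2 × R2 := (x.snd, x.fst + x.snd)

/-- The Lee weight on `R`: `w_L(0)=0, w_L(1)=1, w_L(u)=2, w_L(1+u)=1`. -/
def wL (x : Ru) : ℕ := if x.fst = 0 then (if x.snd = 0 then 0 else 2) else 1

/-- The ambient space `ℤ₂^α × R^β`. -/
abbrev V (α β : ℕ) : Type := (Fin α → R2) × (Fin β → Ru)

/-- Lee weight of a vector of `ℤ₂^α × R^β`: Hamming weight on the binary part plus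
coordinatewise Lee weight on the `R` part. -/
def wLvec {α β : ℕ} (c : V α β) : ℕ :=
  (∑ i, if c.1 i ≠ 0 then 1 else 0) + ∑ j, wL (c.2 j)

/-- Hamming weight of a binary vector. -/
def wHvec {ι : Type} [Fintype ι] (f : ι → R2) : ℕ :=
  ∑ i, if f i ≠ 0 then 1 else 0

/-- The extended Gray map `Φ : ℤ₂^α × R^β → ℤ₂^(α+2β)`: identity on the binary
coordinates, `ψ` coordinatewise on the `R` coordinates. -/
def Phi {α β : ℕ} (c : V α β) : (Fin α ⊕ Fin β × Fin 2) → R2 :=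
  fun i => match i with
  | Sum.inl i => c.1 i
  | Sum.inr (j, k) => if k = 0 then (psi (c.2 j)).1 else (psi (c.2 j)).2

/-- Scalar multiplication of `R` on `ℤ₂^α × R^β`:
`(r + q u) · (a | b) = (r a | (r + q u) b)`. -/
def rsmul {α β : ℕ} (c : Ru) (v : V α β) : V α β :=
  (fun i => c.fst * v.1 i, fun j => c * v.2 j)

/-- The inner product `v ⋅ w = u ∑ vᵢ wᵢ + ∑ vⱼ wⱼ ∈ R` on `ℤ₂^α × R^β`. -/
def ip {α β : ℕ} (v w : V α β) : Ru :=
  eps * (∑ i, TrivSqZeroExt.inl (v.1 i * w.1 i)) + ∑ j, v.2 j * w.2 j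

/-- The dual of a code with respect to the inner product `ip`. -/
def dualSet {α β : ℕ} (C : Set (V α β)) : Set (V α β) :=
  {w | ∀ v ∈ C, ip v w = 0}

/-- The all-ones / all-`u` vector `(1,…,1 | u,…,u)`. -/
def allone (α β : ℕ) : V α β := (fun _ => 1, fun _ => (eps : Ru))


/-!
Count the Lee weights of all codewords in two ways. Summed over the codewords, the weight is
`m (|C| - 1)`. Summed over the `α + 2β` coordinates of the Gray image instead, each coordinate
is a nonzero additive map `C → ℤ₂`, so it is nonzero on exactly half of `C`; this gives
`(α + 2β) |C| / 2`. Since `|C|` is coprime to `|C| - 1`, it divides `2m`, and `λ = 2m / |C|`.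
-/

open Finset

theorem AddMonoidHom.two_mul_card_filter_ne_zero {G : Type*} [AddGroup G] [Fintype G]
    (φ : G →+ ZMod 2) (hφ : φ ≠ 0) :
    2 * #{g | φ g ≠ 0} = Fintype.card G := by
  obtain ⟨g₀, hg₀⟩ : ∃ g₀, φ g₀ ≠ 0 := by
    by_contra! h
    exact hφ (AddMonoidHom.ext h)
  have one_of_ne_zero : ∀ a : ZMod 2, a ≠ 0 → a = 1 := by decide
  have h₁ := one_of_ne_zero _ hg₀
  -- translation by `g₀` swaps the kernel of `φ` with its complement
  have hswap : #{g | ¬φ g ≠ 0} = #{g | φ g ≠ 0} := by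
    refine card_bij' (fun g _ => g + g₀) (fun g _ => g - g₀) ?_ ?_ ?_ ?_
    · intro g hg
      simp_all
    · intro g hg
      simp_all [one_of_ne_zero _ (mem_filter.1 hg).2]
    · intro g _
      exact add_sub_cancel_right g g₀
    · intro g _
      exact sub_add_cancel g g₀
  have := card_filter_add_card_filter_not (s := univ) (fun g => φ g ≠ 0)
  rw [card_univ] at this
  omega

lemma wL_eq_weight_psi (x : Ru) :
    wL x = (if (psi x).1 ≠ 0 then 1 else 0) + (if (psi x).2 ≠ 0 then 1 else 0) := by
  revert x
  decide

-- `r = 1` or `r = u`, since `psi (u * x) = (x.fst, x.fst)`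
lemma exists_psi_mul_ne_zero {x : Ru} (hx : x ≠ 0) :
    ∃ r : Ru, (psi (r * x)).1 ≠ 0 ∧ (psi (r * x)).2 ≠ 0 := by
  revert x
  decide

section GrayMap

variable {α β : ℕ}

lemma wLvec_eq_wHvec_Phi (c : V α β) : wLvec c = wHvec (Phi c) := by
  rw [wLvec, wHvec, Fintype.sum_sum_type, Fintype.sum_prod_type]
  congr 1
  exact sum_congr rfl fun j _ => by rw [Fin.sum_univ_two, wL_eq_weight_psi]; rfl

def grayCoord (i : Fin α ⊕ Fin β × Fin 2) : V α β →+ ZMod 2 where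
  toFun c := Phi c i
  map_zero' := by
    rcases i with i | ⟨j, k⟩ <;> simp [Phi, psi]
  map_add' a b := by
    rcases i with i | ⟨j, k⟩
    · rfl
    · simp only [Phi, psi, Prod.snd_add, Pi.add_apply, TrivSqZeroExt.fst_add,
        TrivSqZeroExt.snd_add]
      split_ifs <;> ring

variable {C : AddSubgroup (V α β)}

lemma exists_mem_Phi_ne_zero (hsmul : ∀ (c : Ru) (v : V α β), v ∈ C → rsmul c v ∈ C)
    (hcols1 : ∀ i : Fin α, ∃ v ∈ C, v.1 i ≠ 0) (hcols2 : ∀ j : Fin β, ∃ v ∈ C, v.2 j ≠ 0) :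
    ∀ i, ∃ v ∈ C, Phi v i ≠ 0
  | .inl i => hcols1 i
  | .inr (j, k) => by
    obtain ⟨v, hv, hvj⟩ := hcols2 j
    obtain ⟨r, hr₁, hr₂⟩ := exists_psi_mul_ne_zero hvj
    refine ⟨rsmul r v, hsmul r v hv, ?_⟩
    by_cases hk : k = 0
    · simpa [Phi, rsmul, hk] using hr₁
    · simpa [Phi, rsmul, hk] using hr₂

lemma two_mul_sum_wLvec [Fintype C]
    (hsmul : ∀ (c : Ru) (v : V α β), v ∈ C → rsmul c v ∈ C)
    (hcols1 : ∀ i : Fin α, ∃ v ∈ C, v.1 i ≠ 0) (hcols2 : ∀ j : Fin β, ∃ v ∈ C, v.2 j ≠ 0) :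
    2 * ∑ v : C, wLvec (v : V α β) = (α + 2 * β) * Fintype.card C := by
  have hcoord : ∀ i, 2 * ∑ v : C, (if Phi (v : V α β) i ≠ 0 then 1 else 0) = Fintype.card C := by
    intro i
    obtain ⟨v, hv, hvi⟩ := exists_mem_Phi_ne_zero hsmul hcols1 hcols2 i
    have hφ : (grayCoord i).comp C.subtype ≠ 0 :=
      fun h => hvi (DFunLike.congr_fun h ⟨v, hv⟩)
    rw [sum_boole]
    exact ((grayCoord i).comp C.subtype).two_mul_card_filter_ne_zero hφ
  simp only [wLvec_eq_wHvec_Phi, wHvec]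
  rw [sum_comm, mul_sum, sum_congr rfl fun i _ => hcoord i, sum_const, card_univ,
    Fintype.card_sum, Fintype.card_prod, smul_eq_mul]
  simp only [Fintype.card_fin]
  ring

end GrayMap

lemma sum_wLvec_of_one_weight {α β m : ℕ} {C : AddSubgroup (V α β)} [Fintype C]
    (hone : ∀ v ∈ C, v ≠ 0 → wLvec v = m) :
    ∑ v : C, wLvec (v : V α β) = m * (Fintype.card C - 1) := by
  rw [← add_sum_erase _ _ (mem_univ 0), sum_congr rfl fun (v : C) hv =>
    hone v v.prop (by simpa using ne_of_mem_erase hv)]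
  simp [wLvec, wL, card_erase_of_mem, mul_comm]

lemma existsUnique_of_two_mul_mul_sub_one_eq {m n N : ℕ} (hm : 0 < m) (hN : 0 < N)
    (h : 2 * m * (N - 1) = n * N) :
    ∃! lam : ℕ, 0 < lam ∧ 2 * m = lam * N ∧ n = lam * (N - 1) := by
  have hcop : Nat.Coprime N (N - 1) :=
    (Nat.coprime_self_sub_right hN).2 (Nat.coprime_one_right _)
  obtain ⟨lam, hlam⟩ : N ∣ 2 * m := hcop.dvd_of_dvd_mul_right ⟨n, by rw [h, mul_comm]⟩
  refine ⟨lam, ⟨Nat.pos_of_ne_zero ?_, by rw [hlam, mul_comm], ?_⟩, ?_⟩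
  · rintro rfl
    omega
  · refine Nat.eq_of_mul_eq_mul_right hN ?_
    rw [← h, hlam]
    ring
  · rintro lam' ⟨-, h', -⟩
    exact Nat.eq_of_mul_eq_mul_right hN (by rw [← h', hlam, mul_comm])

theorem one_weight_lambda_general (α β : ℕ) (C : AddSubgroup (V α β))
    (hsmul : ∀ (c : Ru) (v : V α β), v ∈ C → rsmul c v ∈ C)
    (m : ℕ) (hm : 0 < m)
    (hone : ∀ v ∈ C, v ≠ 0 → wLvec v = m)
    (hcols1 : ∀ i : Fin α, ∃ v ∈ C, v.1 i ≠ 0)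
    (hcols2 : ∀ j : Fin β, ∃ v ∈ C, v.2 j ≠ 0) :
    ∃! lam : ℕ, 0 < lam ∧ 2 * m = lam * Nat.card ↥C ∧
      α + 2 * β = lam * (Nat.card ↥C - 1) := by
  have := Fintype.ofFinite C
  rw [Nat.card_eq_fintype_card]
  refine existsUnique_of_two_mul_mul_sub_one_eq hm Fintype.card_pos ?_
  rw [mul_assoc, ← sum_wLvec_of_one_weight hone, two_mul_sum_wLvec hsmul hcols1 hcols2]

/-- a one-Lee-weight additive code `C ⊆ ℤ₂^α × R^β` of weight `m`, with
`|C|` a power of two and no identically zero coordinate, admits a unique positive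
integer `λ` with `m = λ |C| / 2` and `α + 2β = λ(|C| − 1)`. -/
theorem one_weight_lambda (α β : ℕ) (C : AddSubgroup (V α β))
    (hsmul : ∀ (c : Ru) (v : V α β), v ∈ C → rsmul c v ∈ C)
    (k m : ℕ) (hcard : Nat.card ↥C = 2 ^ k) (hm : 0 < m)
    (hone : ∀ v ∈ C, v ≠ 0 → wLvec v = m)
    (hcols1 : ∀ i : Fin α, ∃ v ∈ C, v.1 i ≠ 0)
    (hcols2 : ∀ j : Fin β, ∃ v ∈ C, v.2 j ≠ 0)
    (hne : ∃ v ∈ C, v ≠ 0) :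
    ∃! lam : ℕ, 0 < lam ∧ 2 * m = lam * Nat.card ↥C ∧
      α + 2 * β = lam * (Nat.card ↥C - 1) :=
  one_weight_lambda_general α β C hsmul m hm hone hcols1 hcols2
end

section
/- Let C be a one-Lee-weight additive code in Z₂^α × R^β with odd nonzero Lee weight m, where every coordinate is nonzero on C and |C| is a power of 2. Then |C| = 2 and C = {(0,...,0 | 0,...,0), (1,...,1 | u,...,u)}; in particular m = α + 2β. -/
open DualNumber

/-! The parity of the Lee weight is additive: it is the sum of the binary coordinates and of
the `ℤ₂`-parts of the `R`-coordinates. If all nonzero codewords have odd weight, the difference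
of two distinct nonzero codewords would have even weight, so `C = {0, v}`. Every binary
coordinate of `v` is then `1` and every `R`-coordinate is nonzero; since `u • v ∈ C` and
`u • u • v = 0` force `u • v = 0`, every `R`-coordinate lies in `uR`, hence equals `u`. -/

lemma wL_cast_zmod_two (x : Ru) : (wL x : ZMod 2) = x.fst := by
  unfold wL
  generalize x.fst = a; generalize x.snd = b
  revert a b; decide

def leeParity (α β : ℕ) : V α β →+ ZMod 2 :=
  AddMonoidHom.mk' (fun v => ∑ i, v.1 i + ∑ j, (v.2 j).fst) fun v w => by
    simp only [Prod.fst_add, Prod.snd_add, Pi.add_apply, TrivSqZeroExt.fst_add,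
      Finset.sum_add_distrib]
    ring

lemma wLvec_cast_zmod_two {α β : ℕ} (v : V α β) :
    (wLvec v : ZMod 2) = leeParity α β v := by
  have hbin (a : ZMod 2) : ((if a ≠ 0 then 1 else 0 : ℕ) : ZMod 2) = a := by revert a; decide
  simp only [wLvec, leeParity, AddMonoidHom.mk'_apply, Nat.cast_add, Nat.cast_sum, hbin,
    wL_cast_zmod_two]

lemma AddSubgroup.eq_of_addMonoidHom_eq_one {G : Type*} [AddCommGroup G] {C : AddSubgroup G}
    (f : G →+ ZMod 2) (hf : ∀ v ∈ C, v ≠ 0 → f v = 1) {v w : G}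
    (hv : v ∈ C) (hv0 : v ≠ 0) (hw : w ∈ C) (hw0 : w ≠ 0) : v = w := by
  by_contra hvw
  have := hf (v - w) (C.sub_mem hv hw) (sub_ne_zero.mpr hvw)
  rw [map_sub, hf v hv hv0, hf w hw hw0, sub_self] at this
  exact zero_ne_one this

lemma AddSubgroup.coe_eq_pair_of_addMonoidHom_eq_one {G : Type*} [AddCommGroup G]
    {C : AddSubgroup G} (f : G →+ ZMod 2) (hf : ∀ v ∈ C, v ≠ 0 → f v = 1) {v₀ : G}
    (hv₀ : v₀ ∈ C) (hv₀0 : v₀ ≠ 0) : (C : Set G) = {0, v₀} := by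
  ext v
  refine ⟨fun hv => ?_, ?_⟩
  · by_cases hv0 : v = 0
    · exact Or.inl hv0
    · exact Or.inr (C.eq_of_addMonoidHom_eq_one f hf hv hv0 hv₀ hv₀0)
  · rintro (rfl | rfl)
    exacts [C.zero_mem, hv₀]

lemma rsmul_rsmul {α β : ℕ} (a b : Ru) (v : V α β) :
    rsmul a (rsmul b v) = rsmul (a * b) v := by
  ext <;> simp [rsmul, mul_assoc]

lemma rsmul_zero_left {α β : ℕ} (v : V α β) : rsmul 0 v = 0 := by
  ext <;> simp [rsmul]

lemma eq_zero_of_rsmul_eps_eq_self {α β : ℕ} {v : V α β} (h : rsmul eps v = v) : v = 0 := by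
  rw [← h, ← h, rsmul_rsmul, eps_mul_eps, rsmul_zero_left]

lemma eq_eps_of_eps_mul_eq_zero {x : Ru} (hx : x ≠ 0) (h : eps * x = 0) : x = eps := by
  have hfst : x.fst = 0 := by simpa using congrArg TrivSqZeroExt.snd h
  have hsnd : x.snd = 1 :=
    Fin.eq_one_of_ne_zero _ fun (hsnd : x.snd = 0) => hx (by ext <;> simp [hfst, hsnd])
  ext <;> simp [hfst, hsnd]

lemma eq_allone {α β : ℕ} {v : V α β} (h1 : ∀ i, v.1 i ≠ 0) (h2 : ∀ j, v.2 j ≠ 0)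
    (heps : rsmul eps v = 0) : v = allone α β := by
  refine Prod.ext (funext fun i => Fin.eq_one_of_ne_zero _ (h1 i))
    (funext fun j => eq_eps_of_eps_mul_eq_zero (h2 j) (congrArg (·.2 j) heps))

lemma wLvec_allone (α β : ℕ) : wLvec (allone α β) = α + 2 * β := by
  simp [wLvec, allone, wL, mul_comm]

theorem one_weight_odd_general (α β : ℕ) (C : AddSubgroup (V α β))
    (hsmul : ∀ (c : Ru) (v : V α β), v ∈ C → rsmul c v ∈ C)
    (m : ℕ) (hmodd : Odd m)
    (hone : ∀ v ∈ C, v ≠ 0 → wLvec v = m)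
    (hcols1 : ∀ i : Fin α, ∃ v ∈ C, v.1 i ≠ 0)
    (hcols2 : ∀ j : Fin β, ∃ v ∈ C, v.2 j ≠ 0)
    (hne : ∃ v ∈ C, v ≠ 0) :
    Nat.card ↥C = 2 ∧ (C : Set (V α β)) = {0, allone α β} ∧ m = α + 2 * β := by
  obtain ⟨v₀, hv₀, hv₀0⟩ := hne
  have hC : (C : Set (V α β)) = {0, v₀} :=
    C.coe_eq_pair_of_addMonoidHom_eq_one (leeParity α β) (fun v hv hv0 => by
      rw [← wLvec_cast_zmod_two, hone v hv hv0, ZMod.natCast_eq_one_iff_odd]; exact hmodd)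
      hv₀ hv₀0
  have hmem {v : V α β} (hv : v ∈ C) : v = 0 ∨ v = v₀ := by
    rwa [← SetLike.mem_coe, hC] at hv
  have hsupp {p : V α β → Prop} (hp0 : ¬ p 0) (h : ∃ v ∈ C, p v) : p v₀ := by
    obtain ⟨v, hv, hpv⟩ := h
    rcases hmem hv with rfl | rfl
    exacts [absurd hpv hp0, hpv]
  have heps : rsmul eps v₀ = 0 := (hmem (hsmul eps v₀ hv₀)).resolve_right
    fun h => hv₀0 (eq_zero_of_rsmul_eps_eq_self h)
  obtain rfl : v₀ = allone α β := eq_allone (fun i => hsupp (by simp) (hcols1 i))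
    (fun j => hsupp (by simp) (hcols2 j)) heps
  refine ⟨?_, hC, (hone _ hv₀ hv₀0).symm.trans (wLvec_allone α β)⟩
  rw [← SetLike.coe_sort_coe, Nat.card_coe_set_eq, hC, Set.ncard_pair hv₀0.symm]

/-- a one-Lee-weight additive code with odd nonzero weight `m`, every
coordinate nonzero on `C` and `|C|` a power of two, is
`{(0,…,0|0,…,0), (1,…,1|u,…,u)}`; in particular `m = α + 2β`. -/
theorem one_weight_odd (α β : ℕ) (C : AddSubgroup (V α β))
    (hsmul : ∀ (c : Ru) (v : V α β), v ∈ C → rsmul c v ∈ C)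
    (k m : ℕ) (hcard : Nat.card ↥C = 2 ^ k) (hmodd : Odd m)
    (hone : ∀ v ∈ C, v ≠ 0 → wLvec v = m)
    (hcols1 : ∀ i : Fin α, ∃ v ∈ C, v.1 i ≠ 0)
    (hcols2 : ∀ j : Fin β, ∃ v ∈ C, v.2 j ≠ 0)
    (hne : ∃ v ∈ C, v ≠ 0) :
    Nat.card ↥C = 2 ∧ (C : Set (V α β)) = {0, allone α β} ∧ m = α + 2 * β :=
  one_weight_odd_general α β C hsmul m hmodd hone hcols1 hcols2 hne
end
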